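/- arXiv:1709.03111 — 8 statements merged into one kernel-verified Lean document; each statement's English description precedes it below -/
import Mathlib

section
/- Fix ε ∈ (0,1) and set K₁ = 5000/ε. Let K > K₁, let ℓ = {0}^{d−1} × ℝ be the vertical axis in ℝ^d, and for a point x with dist(x, ℓ) < K let x^K_− denote the lower of the two points of ℓ at distance exactly K from x. Let ξ ⊆ ℝ^d satisfy ‖u − v‖ > 2 for all distinct u, v ∈ ξ. Suppose x ∈ ξ, x' lies on the segment [x, x^K_−] with ‖x − x'‖ = m·(ε/10) for some integer 1 ≤ m ≤ ⌈100/ε⌉, and y ∈ ξ with y ≠ x satisfies ‖y − x'‖ ≤ 2. Then ‖y − x^K_−‖ < K, i.e., y lies strictly inside the ball of radius K centered at x^K_−. -/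
set_option maxHeartbeats 1000000

open RealInnerProductSpace

/-- (Lemma on elementary moves.) Work in `ℝ^(d+1)` with the vertical axis
`ℓ = {0}^d × ℝ`. Fix `ε ∈ (0,1)` and `K > 5000/ε`. Let `ξ` be a hard-core configuration
(pairwise distances `> 2`), `x ∈ ξ`, and let `xm = x^K_-` be the lower of the two points
of `ℓ` at distance exactly `K` from `x`. If `x'` lies on the segment `[x, xm]` with
`‖x - x'‖ = m·(ε/10)` for some integer `1 ≤ m ≤ ⌈100/ε⌉`, and `y ∈ ξ`, `y ≠ x`, satisfies
`‖y - x'‖ ≤ 2` (i.e. `y` forbids the elementary move), then `‖y - xm‖ < K`. -/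
theorem stmt_2 {d : ℕ} (ε K : ℝ) (hε : 0 < ε) (hε1 : ε < 1)
    (hK : 5000 / ε < K)
    (ξ : Set (EuclideanSpace ℝ (Fin (d + 1))))
    (hhc : ∀ u ∈ ξ, ∀ v ∈ ξ, u ≠ v → 2 < dist u v)
    (x : EuclideanSpace ℝ (Fin (d + 1))) (hx : x ∈ ξ)
    (hxℓ : Metric.infDist x {p : EuclideanSpace ℝ (Fin (d + 1)) |
      ∀ i : Fin (d + 1), i ≠ Fin.last d → p i = 0} < K)
    (xm : EuclideanSpace ℝ (Fin (d + 1)))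
    (hxmℓ : ∀ i : Fin (d + 1), i ≠ Fin.last d → xm i = 0)
    (hxmK : dist x xm = K)
    (hxmlow : xm (Fin.last d) < x (Fin.last d))
    (m : ℕ) (hm1 : 1 ≤ m) (hm2 : m ≤ ⌈(100 : ℝ) / ε⌉₊)
    (x' : EuclideanSpace ℝ (Fin (d + 1)))
    (hx'seg : x' ∈ segment ℝ x xm)
    (hx'dist : dist x x' = m * (ε / 10))
    (y : EuclideanSpace ℝ (Fin (d + 1))) (hy : y ∈ ξ) (hyx : y ≠ x)
    (hforbid : dist y x' ≤ 2) :
    dist y xm < K := by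
  obtain ⟨a, b, ha, hb, hab, hcomb⟩ := hx'seg
  have ha' : a = 1 - b := by linarith
  subst ha'
  set t : ℝ := m * (ε / 10) with ht
  have hK0 : (0 : ℝ) < K := lt_trans (by positivity) hK
  have hεK : 5000 < ε * K := by
    have := (div_lt_iff₀ hε).mp hK; nlinarith
  have hm1' : (1 : ℝ) ≤ (m : ℝ) := by exact_mod_cast hm1
  have ht0 : 0 < t := by rw [ht]; positivity
  have htlb : ε / 10 ≤ t := by rw [ht]; nlinarith
  have htK : 500 < t * K := by nlinarith
  -- vector identities
  have hv : x - x' = b • (x - xm) := by rw [← hcomb]; module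
  have hw : x' - xm = (1 - b) • (x - xm) := by rw [← hcomb]; module
  have hxxm : ‖x - xm‖ = K := by rw [← dist_eq_norm, hxmK]
  have hbK : b * K = t := by
    have : ‖x - x'‖ = t := by rw [← dist_eq_norm, hx'dist]
    rw [hv, norm_smul, Real.norm_eq_abs, abs_of_nonneg hb, hxxm] at this
    exact this
  have hb0 : 0 < b := by nlinarith
  have hxx' : ‖x - x'‖ = t := by rw [← dist_eq_norm, hx'dist]
  have hwn : ‖x' - xm‖ = (1 - b) * K := by
    rw [hw, norm_smul, Real.norm_eq_abs, abs_of_nonneg ha, hxxm]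
  have hyx2 : 2 < ‖y - x‖ := by
    have := hhc y hy x hx hyx; rwa [dist_eq_norm] at this
  have hyx'2 : ‖y - x'‖ ≤ 2 := by rwa [dist_eq_norm] at hforbid
  have hexp : ‖y - x‖ ^ 2
      = ‖y - x'‖ ^ 2 - 2 * (b * (inner ℝ (y - x') (x - xm) : ℝ)) + t ^ 2 := by
    have h1 : y - x = (y - x') - (x - x') := by abel
    rw [h1, norm_sub_sq_real, hxx', hv, real_inner_smul_right]
  have hfin : ‖y - xm‖ ^ 2
      = ‖y - x'‖ ^ 2 + 2 * ((1 - b) * (inner ℝ (y - x') (x - xm) : ℝ)) + ((1 - b) * K) ^ 2 := by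
    have h1 : y - xm = (y - x') + (x' - xm) := by abel
    rw [h1, norm_add_sq_real, hwn, hw, real_inner_smul_right]
  -- generalize to opaque reals
  obtain ⟨I, hIg⟩ : ∃ r : ℝ, (inner ℝ (y - x') (x - xm) : ℝ) = r := ⟨_, rfl⟩
  obtain ⟨A, hA⟩ : ∃ r : ℝ, ‖y - x‖ = r := ⟨_, rfl⟩
  obtain ⟨B, hB⟩ : ∃ r : ℝ, ‖y - x'‖ = r := ⟨_, rfl⟩
  obtain ⟨C, hC⟩ : ∃ r : ℝ, ‖y - xm‖ = r := ⟨_, rfl⟩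
  have hC0 : 0 ≤ C := hC ▸ norm_nonneg _
  rw [hIg, hA, hB] at hexp
  rw [hIg, hB, hC] at hfin
  rw [hA] at hyx2
  rw [hB] at hyx'2
  have hB0 : 0 ≤ B := hB ▸ norm_nonneg _
  have hkey : b * I < t ^ 2 / 2 := by nlinarith
  have hIub : I < t * K / 2 := by nlinarith [mul_pos hb0 (mul_pos ht0 hK0)]
  clear hv hw hcomb hexp hIg hA hB hhc hxℓ hxmℓ hxmK hxmlow hx'dist hforbid hx hy hyx
  have hsq : C ^ 2 < K ^ 2 := by
    have haI : (1 - b) * I ≤ (1 - b) * (t * K / 2) :=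
      mul_le_mul_of_nonneg_left hIub.le ha
    have hbK' : (1 - b) * K = K - t := by nlinarith
    rw [hbK'] at hfin
    have haI2 : 2 * ((1 - b) * I) ≤ (K - t) * t := by nlinarith [haI, hbK', ht0]
    nlinarith [hfin, haI2, htK, hB0, hyx'2]
  rw [dist_eq_norm, hC]
  nlinarith [hsq, hC0, hK0]
end

section
/- Fix ε ∈ (0,1) and set K₂ = (2000/ε)². Let K > K₂ and let ℓ = {0}^{d−1} × ℝ. Suppose x, y ∈ ℝ^d satisfy dist(x, ℓ) < K, dist(y, ℓ) < K, and ‖x − y‖ < 10. Let b < 20 and set x' = (b/K)·x^K_− + ((K−b)/K)·x and y' = (b/K)·y^K_− + ((K−b)/K)·y, where x^K_− (resp. y^K_−) is the lower point of ℓ at distance K from x (resp. y). Then |‖x − y‖ − ‖x' − y'‖| < ε/10. -/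
/-!
Write `x⁻, y⁻` for the lower points. Since `x' - y' = (x - y) - (b/K) • ((x - x⁻) - (y - y⁻))`,
the distance changes by at most `(b/K) ‖(x - x⁻) - (y - y⁻)‖`. The vector `x - x⁻` has the same
horizontal part as `x`, of length `r_x ≤ K`, and a positive vertical drop `s_x` with
`r_x² + s_x² = K²`. Hence `(s_x - s_y)² ≤ |s_x² - s_y²| = |r_x² - r_y²| ≤ 2K ‖x - y‖`, so
`‖(x - x⁻) - (y - y⁻)‖² ≤ (K + 10)² - K² < 25K`, and the change is `O(K^{-1/2})`.
-/

open RealInnerProductSpace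

lemma sub_sq_le_abs_sq_sub_sq {a b : ℝ} (ha : 0 ≤ a) (hb : 0 ≤ b) :
    (a - b) ^ 2 ≤ |a ^ 2 - b ^ 2| := by
  rw [sq_sub_sq, abs_mul, abs_of_nonneg (add_nonneg ha hb), sq, ← abs_mul_abs_self]
  exact mul_le_mul_of_nonneg_right (abs_sub_le_iff.2 ⟨by linarith, by linarith⟩) (abs_nonneg _)

section Axis

variable {E : Type*} [NormedAddCommGroup E] [InnerProductSpace ℝ E] {u : E}

lemma norm_sub_smul_sq_eq (hu : ‖u‖ = 1) (v : E) (s : ℝ) :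
    ‖v - s • u‖ ^ 2 = ‖v - ⟪v, u⟫ • u‖ ^ 2 + (⟪v, u⟫ - s) ^ 2 := by
  simp only [norm_sub_sq_real, inner_smul_right, norm_smul, Real.norm_eq_abs, mul_pow, sq_abs, hu]
  ring

lemma norm_sub_sub_sub_sq_le {x y xm ym : E} {K : ℝ} (hu : ‖u‖ = 1)
    (hxm : xm ∈ ℝ ∙ u) (hym : ym ∈ ℝ ∙ u) (hxK : ‖x - xm‖ = K) (hyK : ‖y - ym‖ = K)
    (hxlow : ⟪xm, u⟫ < ⟪x, u⟫) (hylow : ⟪ym, u⟫ < ⟪y, u⟫) :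
    ‖(x - xm) - (y - ym)‖ ^ 2 ≤ (K + ‖x - y‖) ^ 2 - K ^ 2 := by
  obtain ⟨s, rfl⟩ := Submodule.mem_span_singleton.1 hxm
  obtain ⟨t, rfl⟩ := Submodule.mem_span_singleton.1 hym
  have huu : ⟪u, u⟫ = 1 := inner_self_eq_one_of_norm_eq_one hu
  simp only [inner_smul_left, huu, conj_trivial, mul_one] at hxlow hylow
  have hx := norm_sub_smul_sq_eq hu x s
  have hy := norm_sub_smul_sq_eq hu y t
  have hxy := norm_sub_smul_sq_eq hu (x - y) 0
  rw [hxK] at hx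
  rw [hyK] at hy
  rw [zero_smul, sub_zero, sub_zero] at hxy
  have hmoved : (x - s • u) - (y - t • u) = (x - y) - (s - t) • u := by module
  have hdiff : ⟪x - y, u⟫ - (s - t) = (⟪x, u⟫ - s) - (⟪y, u⟫ - t) := by
    rw [inner_sub_left]; ring
  rw [hmoved, norm_sub_smul_sq_eq hu, hdiff]
  set rx := ‖x - ⟪x, u⟫ • u‖
  set ry := ‖y - ⟪y, u⟫ • u‖
  set w := ‖x - y - ⟪x - y, u⟫ • u‖
  have hK : 0 ≤ K := hxK ▸ norm_nonneg _
  have hw : |rx - ry| ≤ w := by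
    have : x - y - ⟪x - y, u⟫ • u = (x - ⟪x, u⟫ • u) - (y - ⟪y, u⟫ • u) := by
      rw [inner_sub_left, sub_smul]; abel
    simpa only [w, this] using abs_norm_sub_norm_le _ _
  have hwxy : w ≤ ‖x - y‖ := abs_le_of_sq_le_sq' (by nlinarith) (norm_nonneg _) |>.2
  -- the lower points make both drops positive, which the first step needs
  have hdrop : ((⟪x, u⟫ - s) - (⟪y, u⟫ - t)) ^ 2 ≤ w * (2 * K) := by
    have hrx : rx ≤ K := abs_le_of_sq_le_sq' (by nlinarith) hK |>.2
    have hry : ry ≤ K := abs_le_of_sq_le_sq' (by nlinarith) hK |>.2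
    calc ((⟪x, u⟫ - s) - (⟪y, u⟫ - t)) ^ 2
        ≤ |(⟪x, u⟫ - s) ^ 2 - (⟪y, u⟫ - t) ^ 2| :=
          sub_sq_le_abs_sq_sub_sq (by linarith) (by linarith)
      _ = |ry - rx| * (ry + rx) := by
          have hr : 0 ≤ ry + rx := add_nonneg (norm_nonneg _) (norm_nonneg _)
          rw [show (⟪x, u⟫ - s) ^ 2 - (⟪y, u⟫ - t) ^ 2 = (ry - rx) * (ry + rx) by
            linear_combination hy - hx, abs_mul, abs_of_nonneg hr]
      _ ≤ w * (2 * K) := by rw [abs_sub_comm]; gcongr; linarith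
  nlinarith

end Axis

lemma abs_dist_sub_dist_smul_add_one_sub_smul_le {F : Type*} [SeminormedAddCommGroup F]
    [NormedSpace ℝ F] (c : ℝ) (x y xm ym : F) :
    |dist x y - dist (c • xm + (1 - c) • x) (c • ym + (1 - c) • y)|
      ≤ |c| * ‖(x - xm) - (y - ym)‖ := by
  have hmoved : (c • xm + (1 - c) • x) - (c • ym + (1 - c) • y)
      = (x - y) - c • ((x - xm) - (y - ym)) := by module
  rw [dist_eq_norm, dist_eq_norm, hmoved]
  calc _ ≤ ‖(x - y) - ((x - y) - c • ((x - xm) - (y - ym)))‖ := abs_norm_sub_norm_le _ _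
    _ = |c| * ‖(x - xm) - (y - ym)‖ := by rw [sub_sub_cancel, norm_smul, Real.norm_eq_abs]

lemma div_mul_lt_of_sq_le_add_sq_sub_sq {ε K b D : ℝ} (hε : 0 < ε) (hε1 : ε < 1)
    (hK : (2000 / ε) ^ 2 < K) (hb0 : 0 ≤ b) (hb : b < 20) (hD : D ^ 2 ≤ (K + 10) ^ 2 - K ^ 2) :
    b / K * D < ε / 10 := by
  have hεK : 2000 ^ 2 < ε ^ 2 * K := by
    rwa [div_pow, div_lt_iff₀ (by positivity), mul_comm] at hK
  have hK : 2000 ^ 2 < K := by nlinarith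
  have hDK : |200 * D| < ε * K :=
    abs_lt_of_sq_lt_sq (by nlinarith) (by positivity)
  rw [abs_mul, abs_of_pos (by norm_num : (0:ℝ) < 200)] at hDK
  rw [div_mul_eq_mul_div, div_lt_div_iff₀ (by positivity) (by norm_num)]
  nlinarith [le_abs_self D, abs_nonneg D]

lemma EuclideanSpace.mem_span_single_of_apply_eq_zero {ι : Type*} [Fintype ι] [DecidableEq ι]
    {i : ι} {v : EuclideanSpace ℝ ι} (hv : ∀ j, j ≠ i → v j = 0) :
    v ∈ ℝ ∙ EuclideanSpace.single i 1 := by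
  refine Submodule.mem_span_singleton.2 ⟨v i, ?_⟩
  ext j
  by_cases hj : j = i
  · subst hj; simp
  · simp [hj, hv j hj]

theorem stmt_3_general {d : ℕ} (ε K : ℝ) (hε : 0 < ε) (hε1 : ε < 1)
    (hK : (2000 / ε) ^ 2 < K)
    (x y : EuclideanSpace ℝ (Fin (d + 1)))
    (hxy : dist x y < 10)
    (xm ym : EuclideanSpace ℝ (Fin (d + 1)))
    (hxmℓ : ∀ i : Fin (d + 1), i ≠ Fin.last d → xm i = 0)
    (hymℓ : ∀ i : Fin (d + 1), i ≠ Fin.last d → ym i = 0)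
    (hxmK : dist x xm = K) (hymK : dist y ym = K)
    (hxmlow : xm (Fin.last d) < x (Fin.last d))
    (hymlow : ym (Fin.last d) < y (Fin.last d))
    (b : ℝ) (hb0 : 0 ≤ b) (hb : b < 20) :
    |dist x y - dist ((b / K) • xm + (1 - b / K) • x)
        ((b / K) • ym + (1 - b / K) • y)| < ε / 10 := by
  set e : EuclideanSpace ℝ (Fin (d + 1)) := EuclideanSpace.single (Fin.last d) 1
  have he : ‖e‖ = 1 := by simp [e]
  have hinner (v : EuclideanSpace ℝ (Fin (d + 1))) : ⟪v, e⟫ = v (Fin.last d) := by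
    simp [e, EuclideanSpace.inner_single_right]
  rw [dist_eq_norm] at hxy hxmK hymK
  have hK0 : 0 < K := lt_of_le_of_lt (sq_nonneg _) hK
  have hdrop := norm_sub_sub_sub_sq_le he
    (EuclideanSpace.mem_span_single_of_apply_eq_zero hxmℓ)
    (EuclideanSpace.mem_span_single_of_apply_eq_zero hymℓ) hxmK hymK
    (by rwa [hinner, hinner]) (by rwa [hinner, hinner])
  calc _ ≤ |b / K| * ‖(x - xm) - (y - ym)‖ :=
        abs_dist_sub_dist_smul_add_one_sub_smul_le _ _ _ _ _
    _ < ε / 10 := by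
        rw [abs_of_nonneg (by positivity)]
        exact div_mul_lt_of_sq_le_add_sq_sub_sq hε hε1 hK hb0 hb
          (hdrop.trans (by gcongr))

/-- Elementary moves of the same magnitude almost preserve distances.
Fix `ε ∈ (0,1)`, `K > (2000/ε)²`, and the vertical axis `ℓ = {0}^d × ℝ` in `ℝ^(d+1)`.
Let `x, y` be at distance `< K` from `ℓ` with `‖x - y‖ < 10`, let `xm = x^K_-` and
`ym = y^K_-` be the lower points of `ℓ` at distance `K` from `x` resp. `y`, let
`0 ≤ b < 20`, and set `x' = (b/K)·xm + (1 - b/K)·x`, `y' = (b/K)·ym + (1 - b/K)·y`.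
Then `|‖x - y‖ - ‖x' - y'‖| < ε/10`. -/
theorem stmt_3 {d : ℕ} (ε K : ℝ) (hε : 0 < ε) (hε1 : ε < 1)
    (hK : (2000 / ε) ^ 2 < K)
    (x y : EuclideanSpace ℝ (Fin (d + 1)))
    (hxℓ : Metric.infDist x {p : EuclideanSpace ℝ (Fin (d + 1)) |
      ∀ i : Fin (d + 1), i ≠ Fin.last d → p i = 0} < K)
    (hyℓ : Metric.infDist y {p : EuclideanSpace ℝ (Fin (d + 1)) |
      ∀ i : Fin (d + 1), i ≠ Fin.last d → p i = 0} < K)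
    (hxy : dist x y < 10)
    (xm ym : EuclideanSpace ℝ (Fin (d + 1)))
    (hxmℓ : ∀ i : Fin (d + 1), i ≠ Fin.last d → xm i = 0)
    (hymℓ : ∀ i : Fin (d + 1), i ≠ Fin.last d → ym i = 0)
    (hxmK : dist x xm = K) (hymK : dist y ym = K)
    (hxmlow : xm (Fin.last d) < x (Fin.last d))
    (hymlow : ym (Fin.last d) < y (Fin.last d))
    (b : ℝ) (hb0 : 0 ≤ b) (hb : b < 20) :
    |dist x y - dist ((b / K) • xm + (1 - b / K) • x)
        ((b / K) • ym + (1 - b / K) • y)| < ε / 10 :=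
  stmt_3_general ε K hε hε1 hK x y hxy xm ym hxmℓ hymℓ hxmK hymK hxmlow hymlow b hb0 hb
end

section
/- Suppose x, y ∈ ℝ^d, x' ∈ ξ, and ‖x − x'‖ < 2 + ε/2 with the angle between the vectors y − x and x' − x at most 35°, ‖x − y‖ > ρ ≥ 100, and ε < 0.1. Then ‖y − x'‖ < ‖y − x‖. -/
open InnerProductGeometry Real

/-- The law of cosines: `‖a - b‖² = ‖a‖² - ‖b‖ (2 ‖a‖ cos ∠(a, b) - ‖b‖)`. -/
theorem norm_sub_lt_norm_of_norm_lt_two_mul_norm_mul_cos_angle {V : Type*}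
    [NormedAddCommGroup V] [InnerProductSpace ℝ V] {a b : V} (hb : b ≠ 0)
    (h : ‖b‖ < 2 * ‖a‖ * cos (angle a b)) : ‖a - b‖ < ‖a‖ := by
  have hsq : ‖a - b‖ ^ 2 < ‖a‖ ^ 2 := by
    rw [norm_sub_sq_real, ← cos_angle_mul_norm_mul_norm]
    nlinarith [norm_pos_iff.mpr hb]
  exact lt_of_pow_lt_pow_left₀ 2 (norm_nonneg a) hsq

theorem stmt_4_general {d : ℕ} (ε ρ : ℝ) (hε1 : ε < 0.1) (hρ : 100 ≤ ρ)
    (x y x' : EuclideanSpace ℝ (Fin d))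
    (hxx' : dist x x' < 2 + ε / 2)
    (hangle : InnerProductGeometry.angle (y - x) (x' - x) ≤ 35 * Real.pi / 180)
    (hfar : ρ < dist x y) :
    dist y x' < dist y x := by
  -- Mathlib's convention `angle v 0 = π / 2` excludes `x' = x`.
  have hstep : x' - x ≠ 0 := by
    intro h
    rw [h, angle_zero_right] at hangle
    linarith [pi_pos]
  have hcos : 1 / 2 ≤ cos (angle (y - x) (x' - x)) := by
    rw [← cos_pi_div_three]
    exact cos_le_cos_of_nonneg_of_le_pi (angle_nonneg _ _) (by linarith [pi_pos])
      (by linarith [pi_pos])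
  rw [dist_eq_norm'] at hxx' hfar
  have key := norm_sub_lt_norm_of_norm_lt_two_mul_norm_mul_cos_angle hstep (by nlinarith)
  rwa [sub_sub_sub_cancel_right, ← dist_eq_norm, ← dist_eq_norm] at key

/-- Distance-decreasing step. If `‖x - x'‖ < 2 + ε/2`, the angle between
`y - x` and `x' - x` is at most `35°`, `‖x - y‖ > ρ ≥ 100`, and `0 < ε < 0.1`, then
`‖y - x'‖ < ‖y - x‖`. -/
theorem stmt_4 {d : ℕ} (ε ρ : ℝ) (hε : 0 < ε) (hε1 : ε < 0.1) (hρ : 100 ≤ ρ)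
    (x y x' : EuclideanSpace ℝ (Fin d))
    (hxx' : dist x x' < 2 + ε / 2)
    (hangle : InnerProductGeometry.angle (y - x) (x' - x) ≤ 35 * Real.pi / 180)
    (hfar : ρ < dist x y) :
    dist y x' < dist y x :=
  stmt_4_general ε ρ hε1 hρ x y x' hxx' hangle hfar
end

section
/- For every L > 0 there exists a set ξ ⊆ ℝ² with pairwise distances strictly greater than 2 such that the number of points of ξ in the open square Q_L = (−L, L)² is at least |Q_L| / (2√3) = (2L)²/(2√3). -/
open Finset


noncomputable def pt (a b : ℝ) : EuclideanSpace ℝ (Fin 2) := (WithLp.equiv 2 _).symm ![a, b]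

lemma dist_pt (a b c d : ℝ) : dist (pt a b) (pt c d) = Real.sqrt ((a-c)^2 + (b-d)^2) := by
  rw [EuclideanSpace.dist_eq]
  congr 1
  rw [Fin.sum_univ_two]
  simp [pt, Real.dist_eq, sq_abs]

lemma two_le_dist_pt {a b c d : ℝ} (h : 4 ≤ (a-c)^2 + (b-d)^2) :
    2 ≤ dist (pt a b) (pt c d) := by
  rw [dist_pt]
  have : (2:ℝ) = Real.sqrt 4 := by
    rw [show (4:ℝ) = 2^2 by norm_num, Real.sqrt_sq (by norm_num)]
  rw [this]
  exact Real.sqrt_le_sqrt h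

lemma key_dist (e : ℝ) (k i k' i' : ℕ) (hne : (k, i) ≠ (k', i')) :
    4 ≤ ((e + (k % 2 : ℕ) + 2*i) - (e + (k' % 2 : ℕ) + 2*i'))^2
        + ((Real.sqrt 3 * k - Real.sqrt 3 * k'))^2 := by
  have h3 : Real.sqrt 3 ^ 2 = 3 := Real.sq_sqrt (by norm_num)
  have hy : (Real.sqrt 3 * k - Real.sqrt 3 * k')^2 = 3 * ((k:ℝ) - k')^2 := by
    rw [← mul_sub]; rw [mul_pow, h3]
  rw [hy]
  rcases eq_or_ne k k' with rfl | hk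
  · -- same row, i ≠ i'
    have hii : i ≠ i' := by simpa using hne
    have h1 : (1:ℤ) ≤ |(i:ℤ) - i'| := Int.one_le_abs (by
      simpa [sub_eq_zero] using (fun h => hii (by exact_mod_cast h)))
    have h1' : (1:ℝ) ≤ |(i:ℝ) - i'| := by
      calc (1:ℝ) = ((1:ℤ):ℝ) := by norm_num
        _ ≤ |((i:ℤ) - i' : ℤ)| := by exact_mod_cast h1
        _ = |(i:ℝ) - i'| := by push_cast; ring_nf
    nlinarith [sq_abs ((i:ℝ) - i'), sq_nonneg ((k:ℝ) - k), abs_nonneg ((i:ℝ) - i')]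
  · rcases (by omega : (k' + 1 = k ∨ k + 1 = k') ∨ (k' + 2 ≤ k ∨ k + 2 ≤ k')) with h | h
    · -- adjacent rows: offset difference odd
      obtain ⟨a, ha⟩ : ∃ a, a = k % 2 := ⟨_, rfl⟩
      obtain ⟨b, hb⟩ : ∃ b, b = k' % 2 := ⟨_, rfl⟩
      set d : ℤ := (a : ℤ) - (b : ℤ) + 2*((i:ℤ) - i') with hdef
      have hdo : Odd d := by rw [hdef, Int.odd_iff]; omega
      have hde : ((e + (k % 2 : ℕ) + 2*i) - (e + (k' % 2 : ℕ) + 2*i')) = (d:ℝ) := by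
        rw [hdef, ← ha, ← hb]; push_cast; ring
      have hd1 : (1:ℤ) ≤ d^2 := by
        have hd0 : d ≠ 0 := by intro h0; rw [h0] at hdo; simp at hdo
        nlinarith [Int.one_le_abs hd0, sq_abs d]
      have hd1' : (1:ℝ) ≤ ((e + (k % 2 : ℕ) + 2*i) - (e + (k' % 2 : ℕ) + 2*i'))^2 := by
        rw [hde]
        calc (1:ℝ) = ((1:ℤ):ℝ) := by norm_num
          _ ≤ ((d^2 : ℤ) : ℝ) := by exact_mod_cast hd1
          _ = ((d:ℝ))^2 := by push_cast; ring
      have hk1 : ((k:ℝ) - k')^2 = 1 := by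
        rcases h with h | h <;> · subst h; push_cast; ring
      nlinarith
    · have hk2 : (2:ℝ)^2 ≤ ((k:ℝ) - k')^2 := by
        rcases h with h | h
        · have : (2:ℝ) ≤ (k:ℝ) - k' := by
            have := h; push_cast [← Nat.cast_le (α := ℝ)] at this ⊢
            have h2 : ((k':ℕ):ℝ) + 2 ≤ k := by exact_mod_cast Nat.cast_le.mpr h
            linarith
          nlinarith
        · have h2 : ((k:ℕ):ℝ) + 2 ≤ k' := by exact_mod_cast Nat.cast_le.mpr h
          nlinarith
      nlinarith [sq_nonneg (((e + (k % 2 : ℕ) + 2*i) - (e + (k' % 2 : ℕ) + 2*i')))]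

open Finset in
lemma core (L : ℝ) (m : ℕ) (e : ℝ) (cnt : ℕ → ℕ)
    (hy : ∀ k < m, |Real.sqrt 3 * k - Real.sqrt 3 * ((m:ℝ)-1)/2| < L)
    (hx : ∀ k < m, ∀ i < cnt k, |e + (k % 2 : ℕ) + 2*i| < L) :
    ∃ S : Finset (EuclideanSpace ℝ (Fin 2)),
      (∀ x ∈ S, ∀ y ∈ S, x ≠ y → 2 ≤ dist x y) ∧
      (∀ p ∈ S, ∀ i : Fin 2, p i ∈ Set.Ioo (-L) L) ∧
      (∑ k ∈ Finset.range m, cnt k : ℝ) ≤ S.card := by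
  classical
  set c : ℝ := Real.sqrt 3 * ((m:ℝ)-1)/2 with hc
  set f : ℕ × ℕ → EuclideanSpace ℝ (Fin 2) :=
    fun a => pt (e + (a.1 % 2 : ℕ) + 2*a.2) (Real.sqrt 3 * a.1 - c) with hf
  set T : Finset (ℕ × ℕ) := (Finset.range m).biUnion
    (fun k => (Finset.range (cnt k)).image (fun i => (k, i))) with hT
  have hmemT : ∀ a : ℕ × ℕ, a ∈ T ↔ a.1 < m ∧ a.2 < cnt a.1 := by
    intro a
    simp only [hT, Finset.mem_biUnion, Finset.mem_range, Finset.mem_image]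
    constructor
    · rintro ⟨k, hk, i, hi, rfl⟩; exact ⟨hk, hi⟩
    · rintro ⟨h1, h2⟩; exact ⟨a.1, h1, a.2, h2, rfl⟩
  have hdist : ∀ a ∈ T, ∀ b ∈ T, a ≠ b → 2 ≤ dist (f a) (f b) := by
    rintro ⟨k, i⟩ _ ⟨k', i'⟩ _ hne
    apply two_le_dist_pt
    have := key_dist e k i k' i' hne
    have hsub : (Real.sqrt 3 * (k:ℝ) - c) - (Real.sqrt 3 * (k':ℝ) - c)
        = Real.sqrt 3 * k - Real.sqrt 3 * k' := by ring
    rw [hsub]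
    exact this
  have hinj : Set.InjOn f T := by
    intro a ha b hb hab
    by_contra hne
    have := hdist a ha b hb hne
    rw [hab, dist_self] at this
    norm_num at this
  refine ⟨T.image f, ?_, ?_, ?_⟩
  · intro x hxm y hym hxy
    obtain ⟨a, ha, rfl⟩ := Finset.mem_image.mp hxm
    obtain ⟨b, hb, rfl⟩ := Finset.mem_image.mp hym
    exact hdist a ha b hb (fun h => hxy (by rw [h]))
  · intro p hp i
    obtain ⟨a, ha, rfl⟩ := Finset.mem_image.mp hp
    rw [hmemT] at ha
    have h1 := hx a.1 ha.1 a.2 ha.2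
    have h2 := hy a.1 ha.1
    rw [abs_lt] at h1 h2
    fin_cases i
    · exact ⟨by simpa [f, pt] using h1.1, by simpa [f, pt] using h1.2⟩
    · refine ⟨?_, ?_⟩
      · show -L < Real.sqrt 3 * a.1 - c
        have : Real.sqrt 3 * (a.1:ℝ) - c = Real.sqrt 3 * a.1 - Real.sqrt 3 * ((m:ℝ)-1)/2 := by
          rw [hc]
        rw [this]; linarith [h2.1]
      · show Real.sqrt 3 * a.1 - c < L
        have : Real.sqrt 3 * (a.1:ℝ) - c = Real.sqrt 3 * a.1 - Real.sqrt 3 * ((m:ℝ)-1)/2 := by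
          rw [hc]
        rw [this]; linarith [h2.2]
  · rw [Finset.card_image_of_injOn hinj]
    have : T.card = ∑ k ∈ Finset.range m, cnt k := by
      rw [hT, Finset.card_biUnion]
      · congr 1; ext k
        rw [Finset.card_image_of_injective _ (fun x y h => by simpa using h)]
        exact Finset.card_range _
      · intro x hxx y hyy hxy
        simp only [Finset.disjoint_left, Finset.mem_image, Finset.mem_range]
        rintro a ⟨i, hi, rfl⟩ ⟨j, hj, hji⟩
        exact hxy ((Prod.mk.injEq _ _ _ _).mp hji).1.symm
    rw [this, Nat.cast_sum]

lemma assemble (L : ℝ) (hL : 0 < L) (S₀ : Finset (EuclideanSpace ℝ (Fin 2)))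
    (hd : ∀ x ∈ S₀, ∀ y ∈ S₀, x ≠ y → 2 ≤ dist x y)
    (hin : ∀ p ∈ S₀, ∀ i : Fin 2, p i ∈ Set.Ioo (-L) L)
    (hcard : (2*L)^2/(2*Real.sqrt 3) ≤ (S₀.card : ℝ)) :
    ∃ ξ : Set (EuclideanSpace ℝ (Fin 2)),
      (∀ x ∈ ξ, ∀ y ∈ ξ, x ≠ y → 2 < dist x y) ∧
      ∃ S : Finset (EuclideanSpace ℝ (Fin 2)),
        (↑S : Set (EuclideanSpace ℝ (Fin 2)))
            ⊆ ξ ∩ {p | ∀ i, p i ∈ Set.Ioo (-L) L} ∧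
        (2 * L) ^ 2 / (2 * Real.sqrt 3) ≤ (S.card : ℝ) := by
  classical
  have hA : 0 < (2*L)^2/(2*Real.sqrt 3) := by
    apply div_pos (by positivity) (by positivity)
  have hne : S₀.Nonempty := by
    rw [← Finset.card_pos]
    have : (0:ℝ) < S₀.card := lt_of_lt_of_le hA hcard
    exact_mod_cast this
  set c : ℝ := S₀.sup' hne (fun p => |p 0| ⊔ |p 1|) with hc
  have hcL : c < L := by
    rw [hc, Finset.sup'_lt_iff]
    intro p hp
    have h0 := hin p hp 0
    have h1 := hin p hp 1
    rw [Set.mem_Ioo] at h0 h1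
    exact max_lt (abs_lt.mpr ⟨by linarith [h0.1], h0.2⟩)
      (abs_lt.mpr ⟨by linarith [h1.1], h1.2⟩)
  have hc0 : 0 ≤ c := by
    obtain ⟨p, hp⟩ := hne
    calc (0:ℝ) ≤ |p 0| := abs_nonneg _
      _ ≤ |p 0| ⊔ |p 1| := le_max_left _ _
      _ ≤ c := Finset.le_sup' (fun p => |p 0| ⊔ |p 1|) hp
  set s : ℝ := 2*L/(L + c) with hs
  have hLc : 0 < L + c := by linarith
  have hs1 : 1 < s := by
    rw [hs, lt_div_iff₀ hLc]
    linarith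
  have hs0 : 0 < s := by linarith
  have hsc : ∀ p ∈ S₀, ∀ i : Fin 2, |s * p i| < L := by
    intro p hp i
    have hpi : |p i| ≤ c := by
      have := Finset.le_sup' (fun p => |p 0| ⊔ |p 1|) hp
      fin_cases i
      · exact le_trans (le_max_left _ _) this
      · exact le_trans (le_max_right _ _) this
    have : |s * p i| = s * |p i| := by rw [abs_mul, abs_of_pos hs0]
    rw [this]
    have h1 : s * |p i| ≤ s * c := mul_le_mul_of_nonneg_left hpi hs0.le
    have h2 : s * c < L := by
      rw [hs, div_mul_eq_mul_div, div_lt_iff₀ hLc]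
      nlinarith
    linarith
  refine ⟨(fun p => s • p) '' ↑S₀, ?_, S₀.image (fun p => s • p), ?_, ?_⟩
  · rintro x ⟨p, hp, rfl⟩ y ⟨q, hq, rfl⟩ hxy
    have hpq : p ≠ q := fun h => hxy (by rw [h])
    have hd2 := hd p hp q hq hpq
    have : dist (s • p) (s • q) = s * dist p q := by
      rw [dist_smul₀, Real.norm_eq_abs, abs_of_pos hs0]
    rw [this]
    nlinarith [dist_nonneg (x := p) (y := q)]
  · intro x hx
    rw [Finset.coe_image] at hx
    obtain ⟨p, hp, rfl⟩ := hx
    refine ⟨⟨p, hp, rfl⟩, ?_⟩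
    intro i
    have := hsc p hp i
    rw [abs_lt] at this
    exact ⟨by simpa using this.1, by simpa using this.2⟩
  · rw [Finset.card_image_of_injective _ (smul_right_injective _ (ne_of_gt hs0))]
    exact hcard

lemma sum_alt (n : ℕ) (hn : 1 ≤ n) (m : ℕ) :
    (m:ℝ) * ((n:ℝ) - 1/2) ≤ ∑ k ∈ range m, ((if k % 2 = 0 then n else n - 1 : ℕ) : ℝ) := by
  induction m using Nat.twoStepInduction with
  | zero => simp
  | one =>
    rw [Finset.sum_range_one, if_pos (by norm_num : (0:ℕ) % 2 = 0)]
    have : (1:ℝ) ≤ n := by exact_mod_cast hn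
    linarith
  | more m ih _ =>
    rw [Finset.sum_range_succ, Finset.sum_range_succ]
    have hsum : ((if m % 2 = 0 then n else n - 1 : ℕ) : ℝ)
        + ((if (m+1) % 2 = 0 then n else n - 1 : ℕ) : ℝ) = 2*(n:ℝ) - 1 := by
      rcases Nat.even_or_odd m with h | h
      · have h' := Nat.even_iff.mp h
        rw [if_pos h', if_neg (by omega)]
        rw [Nat.cast_sub hn]; push_cast; ring
      · have h' := Nat.odd_iff.mp h
        rw [if_neg (by omega), if_pos (by omega)]
        rw [Nat.cast_sub hn]; push_cast; ring
    have hc2 : ((m+2:ℕ):ℝ) = (m:ℝ) + 2 := by push_cast; ring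
    rw [hc2]
    linarith

/-- For every `L > 0` there is a configuration `ξ ⊆ ℝ²` with pairwise
distances strictly greater than `2` having at least `(2L)²/(2√3)` points inside the
open square `Q_L = (-L, L)²`. -/
theorem stmt_5 (L : ℝ) (hL : 0 < L) :
    ∃ ξ : Set (EuclideanSpace ℝ (Fin 2)),
      (∀ x ∈ ξ, ∀ y ∈ ξ, x ≠ y → 2 < dist x y) ∧
      ∃ S : Finset (EuclideanSpace ℝ (Fin 2)),
        (↑S : Set (EuclideanSpace ℝ (Fin 2)))
            ⊆ ξ ∩ {p | ∀ i, p i ∈ Set.Ioo (-L) L} ∧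
        (2 * L) ^ 2 / (2 * Real.sqrt 3) ≤ (S.card : ℝ) := by
  have h3 : (0:ℝ) < Real.sqrt 3 := Real.sqrt_pos.mpr (by norm_num)
  set n : ℕ := ⌈L⌉₊ with hn
  set m : ℕ := ⌈2*L/Real.sqrt 3⌉₊ with hm
  have hm1 : 2*L/Real.sqrt 3 ≤ m := Nat.le_ceil _
  have hm2 : (m:ℝ) < 2*L/Real.sqrt 3 + 1 := Nat.ceil_lt_add_one (by positivity)
  have hn1 : L ≤ n := Nat.le_ceil _
  have hn2 : (n:ℝ) < L + 1 := Nat.ceil_lt_add_one hL.le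
  have hnn : 1 ≤ n := Nat.one_le_iff_ne_zero.mpr (by
    simp only [hn, ne_eq, Nat.ceil_eq_zero, not_le]; exact hL)
  have hnR : (1:ℝ) ≤ n := by exact_mod_cast hnn
  have hmL : 2*L/Real.sqrt 3 ≤ (m:ℝ) := hm1
  have hkey : (2*L)^2/(2*Real.sqrt 3) = (2*L/Real.sqrt 3) * L := by
    field_simp
  have hy : ∀ k < m, |Real.sqrt 3 * k - Real.sqrt 3 * ((m:ℝ)-1)/2| < L := by
    intro k hk
    have hk' : (k:ℝ) ≤ (m:ℝ) - 1 := by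
      have : (k:ℝ) + 1 ≤ m := by exact_mod_cast Nat.succ_le_of_lt hk
      linarith
    have h0k : (0:ℝ) ≤ k := Nat.cast_nonneg k
    have hspan : Real.sqrt 3 * ((m:ℝ) - 1) < 2*L := by
      have h1 : (m:ℝ) - 1 < 2*L/Real.sqrt 3 := by linarith
      have h2 : Real.sqrt 3 * ((m:ℝ)-1) < Real.sqrt 3 * (2*L/Real.sqrt 3) :=
        mul_lt_mul_of_pos_left h1 h3
      have h4 : Real.sqrt 3 * (2*L/Real.sqrt 3) = 2*L := by field_simp
      linarith
    have hgek : 0 ≤ Real.sqrt 3 * (k:ℝ) := by positivity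
    have hlek : Real.sqrt 3 * (k:ℝ) ≤ Real.sqrt 3 * ((m:ℝ)-1) :=
      mul_le_mul_of_nonneg_left hk' h3.le
    rw [abs_lt]
    constructor <;> [nlinarith; nlinarith]
  by_cases hcase : (n:ℝ) < L + 1/2
  · -- Case A
    have hx : ∀ k < m, ∀ i < n, |(1/2 - (n:ℝ)) + (k % 2 : ℕ) + 2*i| < L := by
      intro k hk i hi
      have hr0 : (0:ℝ) ≤ ((k % 2 : ℕ) : ℝ) := Nat.cast_nonneg _
      have hr1 : ((k % 2 : ℕ) : ℝ) ≤ 1 := by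
        exact_mod_cast Nat.le_of_lt_succ (Nat.mod_lt k (by norm_num))
      have hi0 : (0:ℝ) ≤ i := Nat.cast_nonneg _
      have hi1 : (i:ℝ) ≤ (n:ℝ) - 1 := by
        have : (i:ℝ) + 1 ≤ n := by exact_mod_cast Nat.succ_le_of_lt hi
        linarith
      rw [abs_lt]; constructor <;> [linarith; linarith]
    obtain ⟨S₀, hd, hin, hcard⟩ := core L m (1/2 - (n:ℝ)) (fun _ => n) hy hx
    apply assemble L hL S₀ hd hin
    refine le_trans ?_ hcard
    rw [Finset.sum_const, Finset.card_range, nsmul_eq_mul, hkey]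
    exact mul_le_mul hm1 hn1 hL.le (Nat.cast_nonneg m)
  · -- Case B
    push_neg at hcase
    have hx : ∀ k < m, ∀ i < (if k % 2 = 0 then n else n - 1),
        |(1 - (n:ℝ)) + (k % 2 : ℕ) + 2*i| < L := by
      intro k hk i hi
      rcases Nat.even_or_odd k with h | h
      · rw [if_pos (Nat.even_iff.mp h)] at hi
        have hk0 : ((k % 2 : ℕ) : ℝ) = 0 := by
          rw [Nat.even_iff.mp h]; norm_num
        have hi0 : (0:ℝ) ≤ i := Nat.cast_nonneg _
        have hi1 : (i:ℝ) ≤ (n:ℝ) - 1 := by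
          have : (i:ℝ) + 1 ≤ n := by exact_mod_cast Nat.succ_le_of_lt hi
          linarith
        rw [hk0, abs_lt]; constructor <;> [linarith; linarith]
      · have hodd : k % 2 = 1 := Nat.odd_iff.mp h
        rw [if_neg (by omega)] at hi
        have hk1 : ((k % 2 : ℕ) : ℝ) = 1 := by
          rw [hodd]; norm_num
        have hi0 : (0:ℝ) ≤ i := Nat.cast_nonneg _
        have hi1 : (i:ℝ) ≤ (n:ℝ) - 2 := by
          have h2 : i + 2 ≤ n := by omega
          have : (i:ℝ) + 2 ≤ n := by exact_mod_cast h2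
          linarith
        rw [hk1, abs_lt]; constructor <;> [linarith; linarith]
    obtain ⟨S₀, hd, hin, hcard⟩ := core L m (1 - (n:ℝ)) (fun k => if k % 2 = 0 then n else n - 1) hy hx
    apply assemble L hL S₀ hd hin
    refine le_trans ?_ hcard
    have hsa := sum_alt n hnn m
    have hmm : (0:ℝ) ≤ m := Nat.cast_nonneg m
    have h1 : (2*L)^2/(2*Real.sqrt 3) ≤ (m:ℝ) * ((n:ℝ) - 1/2) := by
      rw [hkey]
      have : L ≤ (n:ℝ) - 1/2 := by linarith
      exact mul_le_mul hm1 this hL.le hmm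
    exact le_trans h1 (le_trans hsa (by norm_num))
end

section
/- Let (c₀, k₀) be constants with c₀ ∈ (0,1) and k₀ a positive integer. Let (Ω, Pr) be a probability space, and suppose we have events Z_i and Z_i^term ⊆ Z_i for 1 ≤ i ≤ k₀ satisfying: (a) Z₁ has probability 1; (b) Z_{k₀} = Z_{k₀}^term; (c) Pr(Z_{i+1}) ≥ c₀ · Pr(Z_i ∖ Z_i^term) for all i < k₀. Then Pr(⋃_{i ≤ k₀} Z_i^term) ≥ (1/2)(c₀/2)^{k₀}. -/
open MeasureTheory

/-- Abstract core of the reduction to a repair algorithm. Given events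
`Z i` with terminal parts `Zt i ⊆ Z i` (`1 ≤ i ≤ k₀`), with `Pr(Z 1) = 1`,
`Z k₀ = Zt k₀`, and `Pr(Z (i+1)) ≥ c₀ · Pr(Z i \ Zt i)` for `1 ≤ i < k₀`, one has
`Pr(⋃_{1 ≤ i ≤ k₀} Zt i) ≥ (1/2)·(c₀/2)^{k₀}`. -/
theorem stmt_7 {Ω : Type*} [MeasurableSpace Ω] (μ : Measure Ω)
    [IsProbabilityMeasure μ]
    (c₀ : ℝ) (hc₀ : c₀ ∈ Set.Ioo (0 : ℝ) 1) (k₀ : ℕ) (hk₀ : 1 ≤ k₀)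
    (Z Zt : ℕ → Set Ω)
    (hmZ : ∀ i, MeasurableSet (Z i)) (hmZt : ∀ i, MeasurableSet (Zt i))
    (hsub : ∀ i, Zt i ⊆ Z i)
    (hone : μ (Z 1) = 1)
    (hterm : Z k₀ = Zt k₀)
    (hstep : ∀ i, 1 ≤ i → i < k₀ →
      c₀ * (μ (Z i \ Zt i)).toReal ≤ (μ (Z (i + 1))).toReal) :
    (1 / 2) * (c₀ / 2) ^ k₀ ≤ (μ (⋃ i ∈ Finset.Icc 1 k₀, Zt i)).toReal := by
  by_contra hcon
  push_neg at hcon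
  obtain ⟨hc0, hc1⟩ := hc₀
  have hhalf : (0:ℝ) < c₀ / 2 := by linarith
  have hhalf1 : c₀ / 2 ≤ 1 := by linarith
  have hUb : ∀ i, 1 ≤ i → i ≤ k₀ →
      (μ (Zt i)).toReal ≤ (μ (⋃ j ∈ Finset.Icc 1 k₀, Zt j)).toReal := by
    intro i h1 h2
    exact ENNReal.toReal_mono (measure_ne_top μ _)
      (measure_mono (Set.subset_biUnion_of_mem (Finset.mem_Icc.mpr ⟨h1, h2⟩)))
  have key : ∀ i, 1 ≤ i → i ≤ k₀ → (c₀ / 2) ^ i ≤ (μ (Z i)).toReal := by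
    intro i h1 h2
    induction i with
    | zero => omega
    | succ n ih =>
      rcases Nat.lt_or_ge 1 (n + 1) with h | h
      · have hn1 : 1 ≤ n := by omega
        have hnk : n < k₀ := by omega
        have hZn := ih hn1 (le_of_lt hnk)
        have hpow : (c₀ / 2) ^ k₀ ≤ (c₀ / 2) ^ n :=
          pow_le_pow_of_le_one (le_of_lt hhalf) hhalf1 (le_of_lt hnk)
        have hZtn : (μ (Zt n)).toReal < (1 / 2) * (c₀ / 2) ^ n :=
          lt_of_le_of_lt (hUb n hn1 (le_of_lt hnk))
            (lt_of_lt_of_le hcon (by nlinarith))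
        have hdiff : (μ (Z n \ Zt n)).toReal
            = (μ (Z n)).toReal - (μ (Zt n)).toReal := by
          rw [measure_diff (hsub n) (hmZt n).nullMeasurableSet (measure_ne_top μ _),
            ENNReal.toReal_sub_of_le (measure_mono (hsub n)) (measure_ne_top μ _)]
        have hs := hstep n hn1 hnk
        rw [hdiff] at hs
        have : (c₀ / 2) ^ (n + 1) ≤ c₀ * ((μ (Z n)).toReal - (μ (Zt n)).toReal) := by
          have : (c₀ / 2) ^ (n + 1) = c₀ * ((1 / 2) * (c₀ / 2) ^ n) := by ring
          rw [this]
          nlinarith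
        linarith
      · have : n = 0 := by omega
        subst this
        have : μ (Z 1) = 1 := hone
        simp [this]
        nlinarith
  have hk := key k₀ hk₀ le_rfl
  have hZtk : (μ (Zt k₀)).toReal < (1 / 2) * (c₀ / 2) ^ k₀ :=
    lt_of_le_of_lt (hUb k₀ hk₀ le_rfl) hcon
  rw [hterm] at hk
  have hposk : (0:ℝ) < (c₀ / 2) ^ k₀ := pow_pos hhalf k₀
  linarith
end

section
/- Let d ≥ 1, K > 20, and let g_m : ℝ^d → ℝ^d (defined on the set of points x with 0 < dist(x, ℓ) < K, where ℓ = {0}^{d−1} × ℝ) be given by g_m(x) = (mε/(10K))·x^K_− + (1 − mε/(10K))·x, where x^K_− is the lower point of ℓ at distance K from x and 1 ≤ m ≤ ⌈100/ε⌉ with mε/10 ≤ 20. Then the absolute value of the Jacobian determinant of g_m at x equals ((K − mε/10)/K)^{d−1}, and hence the inverse map g_m^{-1} has Jacobian determinant of absolute value (K/(K − mε/10))^{d−1} < (K/(K−20))^{d−1}. -/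
/-!
The move is a shear: horizontally it is the homothety of ratio `c = (K - mε/10)/K`, and
vertically it subtracts a function of the horizontal coordinate only. Its Jacobian matrix is
therefore block lower triangular with diagonal blocks `c • 1` and `1`, so its determinant is
`c ^ (d - 1)`. For the strict bound, `m ≤ ⌈100/ε⌉` gives `mε < 100 + ε`, hence `mε/10 < 20`,
and `d - 1 ≠ 0` because the horizontal space contains the nonzero vector `x.1`.
-/

open Module

theorem LinearMap.det_smul_fst_prod_snd_sub {𝕜 E : Type*} [Field 𝕜] [AddCommGroup E]
    [Module 𝕜 E] [FiniteDimensional 𝕜 E] (c : 𝕜) (ψ : E →ₗ[𝕜] 𝕜) :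
    LinearMap.det
        ((c • LinearMap.fst 𝕜 E 𝕜).prod (LinearMap.snd 𝕜 E 𝕜 - ψ ∘ₗ LinearMap.fst 𝕜 E 𝕜)) =
      c ^ finrank 𝕜 E := by
  classical
  let bE := finBasis 𝕜 E
  let b := bE.prod (Basis.singleton Unit 𝕜)
  have hM : LinearMap.toMatrix b b
      ((c • LinearMap.fst 𝕜 E 𝕜).prod (LinearMap.snd 𝕜 E 𝕜 - ψ ∘ₗ LinearMap.fst 𝕜 E 𝕜)) =
      Matrix.fromBlocks (c • 1) 0 (Matrix.of fun _ j => -ψ (bE j)) 1 := by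
    ext (i | i) (j | j) <;>
      simp [LinearMap.toMatrix_apply, b, Basis.prod_apply, Matrix.one_apply,
        Finsupp.single_apply, eq_comm]
  rw [← LinearMap.det_toMatrix b, hM, Matrix.det_fromBlocks_zero₁₂, Matrix.det_smul]
  simp

theorem det_fderiv_smul_prod_sub {𝕜 E : Type*} [NontriviallyNormedField 𝕜]
    [NormedAddCommGroup E] [NormedSpace 𝕜 E] [FiniteDimensional 𝕜 E]
    (c : 𝕜) {f : E → 𝕜} {x : E × 𝕜} (hf : DifferentiableAt 𝕜 f x.1) :
    (fderiv 𝕜 (fun z : E × 𝕜 => (c • z.1, z.2 - f z.1)) x).det = c ^ finrank 𝕜 E := by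
  have hderiv : HasFDerivAt (fun z : E × 𝕜 => (c • z.1, z.2 - f z.1))
      ((c • ContinuousLinearMap.fst 𝕜 E 𝕜).prod
        (ContinuousLinearMap.snd 𝕜 E 𝕜 - (fderiv 𝕜 f x.1).comp (ContinuousLinearMap.fst 𝕜 E 𝕜)))
      x :=
    ((c • ContinuousLinearMap.fst 𝕜 E 𝕜).hasFDerivAt).prodMk
      (hasFDerivAt_snd.sub (hf.hasFDerivAt.comp x hasFDerivAt_fst))
  rw [hderiv.fderiv]
  exact LinearMap.det_smul_fst_prod_snd_sub c (fderiv 𝕜 f x.1 : E →ₗ[𝕜] 𝕜)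

theorem Nat.cast_mul_lt_add_of_le_ceil_div {a ε : ℝ} {m : ℕ} (ha : 0 ≤ a) (hε : 0 < ε)
    (hm : m ≤ ⌈a / ε⌉₊) : (m : ℝ) * ε < a + ε := by
  have hceil : (m : ℝ) < a / ε + 1 :=
    (Nat.cast_le.mpr hm).trans_lt (Nat.ceil_lt_add_one (by positivity))
  calc (m : ℝ) * ε < (a / ε + 1) * ε := mul_lt_mul_of_pos_right hceil hε
    _ = a + ε := by field_simp

theorem differentiableAt_sqrt_sq_sub_norm_sq {E : Type*} [NormedAddCommGroup E]
    [InnerProductSpace ℝ E] {K : ℝ} {h : E} (hh : ‖h‖ < K) :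
    DifferentiableAt ℝ (fun y : E => Real.sqrt (K ^ 2 - ‖y‖ ^ 2)) h :=
  ((differentiableAt_id.norm_sq ℝ).const_sub (K ^ 2)).sqrt
    (by nlinarith [norm_nonneg h] : 0 < K ^ 2 - ‖h‖ ^ 2).ne'

theorem stmt_8_general (d : ℕ) (ε K : ℝ) (hε : 0 < ε) (hε1 : ε < 1)
    (hK : 20 < K) (m : ℕ) (hm2 : m ≤ ⌈(100 : ℝ) / ε⌉₊)
    (x : (EuclideanSpace ℝ (Fin (d - 1))) × ℝ)
    (hx0 : 0 < ‖x.1‖) (hxK : ‖x.1‖ < K) :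
    |(fderiv ℝ (fun z : (EuclideanSpace ℝ (Fin (d - 1))) × ℝ =>
        ((((K - (m : ℝ) * ε / 10) / K) • z.1 : EuclideanSpace ℝ (Fin (d - 1))),
          z.2 - ((m : ℝ) * ε / (10 * K)) * Real.sqrt (K ^ 2 - ‖z.1‖ ^ 2))) x).det|
        = ((K - (m : ℝ) * ε / 10) / K) ^ (d - 1)
      ∧ (K / (K - (m : ℝ) * ε / 10)) ^ (d - 1) < (K / (K - 20)) ^ (d - 1) := by
  have hmε : (m : ℝ) * ε / 10 < 20 := by
    linarith [Nat.cast_mul_lt_add_of_le_ceil_div (by norm_num) hε hm2]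
  have hd : d - 1 ≠ 0 := by
    have hpos := (finrank_pos_iff_exists_ne_zero (R := ℝ)).mpr ⟨x.1, norm_pos_iff.mp hx0⟩
    simp only [finrank_euclideanSpace_fin] at hpos
    omega
  constructor
  · rw [det_fderiv_smul_prod_sub _ ((differentiableAt_sqrt_sq_sub_norm_sq hxK).const_mul _),
      finrank_euclideanSpace_fin,
      abs_of_nonneg (pow_nonneg (div_nonneg (by linarith) (by linarith)) _)]
  · exact pow_lt_pow_left₀ (div_lt_div_of_pos_left (by linarith) (by linarith) (by linarith))
      (div_nonneg (by linarith) (by linarith)) hd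

/-- Jacobian of an elementary move. Represent `ℝ^d` (`d ≥ 1`) as
`ℝ^{d-1} × ℝ` (horizontal × vertical), with axis `ℓ = {0} × ℝ`. For a point
`z = (h, v)` with `0 < ‖h‖ < K`, the lower point of `ℓ` at distance `K` from `z` is
`z^K_- = (0, v - √(K² - ‖h‖²))`, and the elementary move of magnitude `m` is
`g_m z = (mε/(10K))·z^K_- + (1 - mε/(10K))·z
       = (((K - mε/10)/K)·h, v - (mε/(10K))·√(K² - ‖h‖²))`.
Its Jacobian determinant has absolute value `((K - mε/10)/K)^{d-1}`; hence the inverse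
map has Jacobian of absolute value `(K/(K - mε/10))^{d-1} < (K/(K-20))^{d-1}`. -/
theorem stmt_8 (d : ℕ) (hd : 1 ≤ d) (ε K : ℝ) (hε : 0 < ε) (hε1 : ε < 1)
    (hK : 20 < K) (m : ℕ) (hm1 : 1 ≤ m) (hm2 : m ≤ ⌈(100 : ℝ) / ε⌉₊)
    (hm3 : (m : ℝ) * ε / 10 ≤ 20)
    (x : (EuclideanSpace ℝ (Fin (d - 1))) × ℝ)
    (hx0 : 0 < ‖x.1‖) (hxK : ‖x.1‖ < K) :
    |(fderiv ℝ (fun z : (EuclideanSpace ℝ (Fin (d - 1))) × ℝ =>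
        ((((K - (m : ℝ) * ε / 10) / K) • z.1 : EuclideanSpace ℝ (Fin (d - 1))),
          z.2 - ((m : ℝ) * ε / (10 * K)) * Real.sqrt (K ^ 2 - ‖z.1‖ ^ 2))) x).det|
        = ((K - (m : ℝ) * ε / 10) / K) ^ (d - 1)
      ∧ (K / (K - (m : ℝ) * ε / 10)) ^ (d - 1) < (K / (K - 20)) ^ (d - 1) :=
  stmt_8_general d ε K hε hε1 hK m hm2 x hx0 hxK
end

section
/- Let x₁, …, x₆ ∈ ℝ² be six points such that the convex hull of {x₁,…,x₆} is within Hausdorff distance ε/10 of a regular hexagon H with circumradius 2 centered at x ∈ ℝ², where ε < 0.1. Then the six rays from x through the points x_i divide the plane into six angular sectors each of angle at most 70°, and 2 < ‖x − x_i‖ < 2 + ε/2 for each i. -/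
/-!
Write `p i - x = u i + e i`, where `u i` is the `i`-th vertex of the hexagon seen from its
centre and `‖e i‖ ≤ ε/10 < 1/100`. Consecutive vertices satisfy `⟪u i, u (i+1)⟫ = 4 cos 60° = 2`,
so Cauchy–Schwarz gives `⟪p i - x, p (i+1) - x⟫ ≥ 2 - 4/100 - 1/100²` while both norms are at
most `2 + 1/100`. Hence the cosine of the sector angle exceeds `0.48 > 0.35 > cos 70°`.
The radial bound is the triangle inequality through the vertex.
-/

open Real InnerProductGeometry
open scoped RealInnerProductSpace

section Perturbation

variable {V : Type*} [NormedAddCommGroup V] [InnerProductSpace ℝ V]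

lemma inner_sub_le_inner_of_norm_sub_le {u w a b : V} {δ : ℝ}
    (ha : ‖a - u‖ ≤ δ) (hb : ‖b - w‖ ≤ δ) :
    ⟪u, w⟫ - (‖u‖ + ‖w‖) * δ - δ ^ 2 ≤ ⟪a, b⟫ := by
  have hδ : 0 ≤ δ := (norm_nonneg _).trans ha
  have hsplit : ⟪a, b⟫ = ⟪u, w⟫ + ⟪a - u, w⟫ + ⟪u, b - w⟫ + ⟪a - u, b - w⟫ := by
    simp only [inner_sub_left, inner_sub_right]; ring
  have h₁ : |⟪a - u, w⟫| ≤ δ * ‖w‖ := (abs_real_inner_le_norm _ _).trans (by gcongr)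
  have h₂ : |⟪u, b - w⟫| ≤ ‖u‖ * δ := (abs_real_inner_le_norm _ _).trans (by gcongr)
  have h₃ : |⟪a - u, b - w⟫| ≤ δ * δ := (abs_real_inner_le_norm _ _).trans (by gcongr)
  rw [hsplit]
  linarith [neg_abs_le ⟪a - u, w⟫, neg_abs_le ⟪u, b - w⟫, neg_abs_le ⟪a - u, b - w⟫]

lemma div_le_cos_angle_of_norm_sub_le {u w a b : V} {r δ : ℝ}
    (hu : ‖u‖ = r) (hw : ‖w‖ = r) (ha : ‖a - u‖ ≤ δ) (hb : ‖b - w‖ ≤ δ) (hδr : δ < r)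
    (hnum : 0 ≤ ⟪u, w⟫ - 2 * r * δ - δ ^ 2) :
    (⟪u, w⟫ - 2 * r * δ - δ ^ 2) / (r + δ) ^ 2 ≤ cos (angle a b) := by
  have hinner := inner_sub_le_inner_of_norm_sub_le ha hb
  rw [hu, hw] at hinner
  have ha_le : ‖a‖ ≤ r + δ := hu ▸ (norm_le_norm_add_norm_sub' a u).trans (by linarith)
  have hb_le : ‖b‖ ≤ r + δ := hw ▸ (norm_le_norm_add_norm_sub' b w).trans (by linarith)
  have ha_pos : 0 < ‖a‖ := by linarith [hu ▸ norm_sub_norm_le u a, norm_sub_rev u a]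
  have hb_pos : 0 < ‖b‖ := by linarith [hw ▸ norm_sub_norm_le w b, norm_sub_rev w b]
  rw [cos_angle]
  exact div_le_div₀ (hnum.trans (by linarith)) (by linarith) (by positivity)
    (by rw [sq]; exact mul_le_mul ha_le hb_le hb_pos.le (by linarith))

lemma angle_le_of_cos_le_cos_angle {a b : V} {t : ℝ} (ht₀ : 0 ≤ t) (htπ : t ≤ π)
    (h : cos t ≤ cos (angle a b)) : angle a b ≤ t := by
  rw [cos_angle] at h
  exact (arccos_le_arccos h).trans_eq (arccos_cos ht₀ htπ)

end Perturbation

lemma cos_seventy_deg_lt : cos (70 * π / 180) < 7 / 20 := by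
  rw [show 70 * π / 180 = π / 2 - π / 9 by ring, cos_pi_div_two_sub]
  linarith [sin_lt (by positivity : 0 < π / 9), pi_lt_d2]

noncomputable def polarVec (r a : ℝ) : EuclideanSpace ℝ (Fin 2) :=
  (WithLp.equiv 2 (Fin 2 → ℝ)).symm ![r * cos a, r * sin a]

lemma norm_polarVec (r a : ℝ) : ‖polarVec r a‖ = |r| := by
  rw [EuclideanSpace.norm_eq, ← sqrt_sq_eq_abs]
  congr 1
  simp only [polarVec, WithLp.equiv_symm_apply, norm_eq_abs, sq_abs, Fin.sum_univ_two,
    Matrix.cons_val_zero, mul_pow, Matrix.cons_val_one, Matrix.cons_val_fin_one]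
  linear_combination r ^ 2 * sin_sq_add_cos_sq a

lemma inner_polarVec (r s a b : ℝ) :
    ⟪polarVec r a, polarVec s b⟫ = r * s * cos (a - b) := by
  simp [polarVec, PiLp.inner_apply, Fin.sum_univ_two, cos_sub]
  ring

lemma cos_hexagon_step (θ : ℝ) (i : Fin 6) :
    cos ((θ + (i : ℕ) * π / 3) - (θ + ((i + 1 : Fin 6) : ℕ) * π / 3)) = 1 / 2 := by
  rw [Fin.val_add_one]
  split_ifs with hi
  · rw [hi, Fin.val_last, show θ + ((5 : ℕ) : ℝ) * π / 3 - (θ + ((0 : ℕ) : ℝ) * π / 3)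
      = 2 * π - π / 3 by push_cast; ring, cos_two_pi_sub, cos_pi_div_three]
  · rw [show θ + (i : ℕ) * π / 3 - (θ + ((i + 1 : ℕ) : ℝ) * π / 3) = -(π / 3) by
      push_cast; ring, cos_neg, cos_pi_div_three]

/-- Six points `p i` within Hausdorff/vertexwise distance `ε/10` of the
vertices `v i = x + 2·(cos(θ + iπ/3), sin(θ + iπ/3))` of a regular hexagon of
circumradius `2` centered at `x`, with `‖x - p i‖ > 2` and `ε < 0.1`, have consecutive
ray angles at `x` of at most `70°`, and `2 < ‖x - p i‖ < 2 + ε/2` for each `i`. -/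
theorem stmt_9 (ε θ : ℝ) (hε : 0 < ε) (hε1 : ε < 0.1)
    (x : EuclideanSpace ℝ (Fin 2))
    (p v : Fin 6 → EuclideanSpace ℝ (Fin 2))
    (hv : ∀ i : Fin 6, v i = x + (WithLp.equiv 2 (Fin 2 → ℝ)).symm
      ![2 * Real.cos (θ + (i : ℕ) * Real.pi / 3),
        2 * Real.sin (θ + (i : ℕ) * Real.pi / 3)])
    (hclose : ∀ i : Fin 6, dist (p i) (v i) ≤ ε / 10)
    (hfar : ∀ i : Fin 6, 2 < dist x (p i)) :
    (∀ i : Fin 6,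
        InnerProductGeometry.angle (p i - x) (p (i + 1) - x) ≤ 70 * Real.pi / 180)
      ∧ ∀ i : Fin 6, 2 < dist x (p i) ∧ dist x (p i) < 2 + ε / 2 := by
  have hvx (i : Fin 6) : v i - x = polarVec 2 (θ + (i : ℕ) * π / 3) := by
    rw [hv i]; exact add_sub_cancel_left _ _
  have hnorm (i : Fin 6) : ‖v i - x‖ = 2 := by simp [hvx, norm_polarVec]
  have hpv (i : Fin 6) : ‖(p i - x) - (v i - x)‖ ≤ 1 / 100 := by
    rw [sub_sub_sub_cancel_right, ← dist_eq_norm]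
    exact (hclose i).trans (by norm_num at hε1 ⊢; linarith)
  refine ⟨fun i => ?_, fun i => ⟨hfar i, ?_⟩⟩
  · have hinner : ⟪v i - x, v (i + 1) - x⟫ = 2 := by
      rw [hvx, hvx, inner_polarVec, cos_hexagon_step]; norm_num
    have hcos := div_le_cos_angle_of_norm_sub_le (hnorm i) (hnorm (i + 1)) (hpv i) (hpv (i + 1))
      (by norm_num) (by rw [hinner]; norm_num)
    rw [hinner] at hcos
    refine angle_le_of_cos_le_cos_angle (by positivity) (by linarith [pi_pos]) ?_
    linarith [cos_seventy_deg_lt, show (7 / 20 : ℝ) ≤ (2 - 2 * 2 * (1 / 100) - (1 / 100) ^ 2) /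
      (2 + 1 / 100) ^ 2 by norm_num]
  · calc dist x (p i) ≤ dist x (v i) + dist (p i) (v i) := dist_triangle_right _ _ _
      _ ≤ 2 + ε / 10 := by rw [dist_comm, dist_eq_norm, hnorm]; linarith [hclose i]
      _ < 2 + ε / 2 := by linarith
end

section
/- Let ξ ∈ Ω(ℝ²) (pairwise distances > 2) and suppose six points x₁, …, x₆ ∈ ξ satisfy B_{2.1}(x) ⊆ B₂(x) ∪ B₂(x₁) ∪ … ∪ B₂(x₆) for some x ∈ ξ, and ‖x − x_i‖ < 2 + ε/2 for each i, where 0 < ε < 0.1. Then every point x' ∈ ξ with x' ∉ {x, x₁, …, x₆} satisfies ‖x' − x‖ > 2.1 > 2 + ε; consequently no point y ∈ ξ satisfies ‖y − x‖ ∈ [2 + 0.9ε, 2 + ε]. -/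
/-- Forbidden distances. Let `ξ ⊆ ℝ²` have pairwise distances `> 2`,
let `x ∈ ξ` and `x₁, …, x₆ ∈ ξ` satisfy `B_{2.1}(x) ⊆ B₂(x) ∪ B₂(x₁) ∪ … ∪ B₂(x₆)`
and `‖x - xᵢ‖ < 2 + ε/2` for each `i`, with `0 < ε < 0.1`. Then every
`x' ∈ ξ ∖ {x, x₁, …, x₆}` satisfies `‖x' - x‖ > 2.1 > 2 + ε`, and consequently no
point `y ∈ ξ` has `‖y - x‖ ∈ [2 + 0.9ε, 2 + ε]`. -/
theorem stmt_19 (ε : ℝ) (hε : 0 < ε) (hε1 : ε < 0.1)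
    (ξ : Set (EuclideanSpace ℝ (Fin 2)))
    (hhc : ∀ u ∈ ξ, ∀ v ∈ ξ, u ≠ v → 2 < dist u v)
    (x : EuclideanSpace ℝ (Fin 2)) (hx : x ∈ ξ)
    (p : Fin 6 → EuclideanSpace ℝ (Fin 2)) (hp : ∀ i, p i ∈ ξ)
    (hcov : Metric.closedBall x 2.1
        ⊆ Metric.closedBall x 2 ∪ ⋃ i : Fin 6, Metric.closedBall (p i) 2)
    (hnear : ∀ i : Fin 6, dist x (p i) < 2 + ε / 2) :
    (∀ x' ∈ ξ, x' ≠ x → (∀ i : Fin 6, x' ≠ p i) → 2.1 < dist x' x)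
      ∧ (2 + ε < 2.1)
      ∧ ∀ y ∈ ξ, dist y x ∉ Set.Icc (2 + 0.9 * ε) (2 + ε) := by
  have hfar : ∀ x' ∈ ξ, x' ≠ x → (∀ i : Fin 6, x' ≠ p i) → 2.1 < dist x' x := by
    intro x' hx' hne hnep
    by_contra h
    push_neg at h
    have hmem : x' ∈ Metric.closedBall x 2.1 := Metric.mem_closedBall.2 h
    rcases hcov hmem with h2 | h2
    · exact absurd (Metric.mem_closedBall.1 h2) (not_le.2 (hhc x' hx' x hx hne))
    · rcases Set.mem_iUnion.1 h2 with ⟨i, hi⟩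
      exact absurd (Metric.mem_closedBall.1 hi) (not_le.2 (hhc x' hx' (p i) (hp i) (hnep i)))
  refine ⟨hfar, by linarith, ?_⟩
  intro y hy ⟨h1, h2⟩
  by_cases hyx : y = x
  · rw [hyx, dist_self] at h1; linarith
  · by_cases hyp : ∀ i : Fin 6, y ≠ p i
    · have := hfar y hy hyx hyp
      have : (2.1 : ℝ) ≤ 2 + ε := le_trans this.le h2
      linarith
    · push_neg at hyp
      rcases hyp with ⟨i, hi⟩
      have := hnear i
      rw [hi, dist_comm] at h1
      linarith
end
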